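/- arXiv:2108.07344 — 5 statements merged into one kernel-verified Lean document; each statement's English description precedes it below -/
import Mathlib

section
/- Define the IsoScore of a nonnegative vector v ∈ ℝⁿ with ‖v‖ = √n by ι(v) := ((n − δ(v)²(n − √n))² − n) / (n(n − 1)) where δ(v) = ‖v − 𝟏‖/√(2(n − √n)). Then ι(v) ∈ [0, 1]. -/
/-!
Expanding the square with `∑ vᵢ² = n` gives `‖v - 𝟏‖² = 2n - 2∑ vᵢ`, so the quantity
`n - δ(v)²(n - √n)` is just `S = ∑ vᵢ` and the IsoScore is `(S² - n) / (n(n - 1))`.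
For nonnegative entries `∑ vᵢ² ≤ S²`, and Cauchy–Schwarz gives `S² ≤ n ∑ vᵢ² = n²`,
so the numerator lies between `0` and the denominator.
-/

open Real Finset

lemma sum_sub_one_sq {ι : Type*} (s : Finset ι) (v : ι → ℝ) :
    ∑ i ∈ s, (v i - 1) ^ 2 = ∑ i ∈ s, v i ^ 2 - 2 * ∑ i ∈ s, v i + #s := by
  simp only [sub_sq, one_pow, mul_one, sum_add_distrib, sum_sub_distrib, ← mul_sum,
    sum_const, nsmul_eq_mul]

lemma sq_sqrt_div_sqrt_two_mul_mul {a d : ℝ} (ha : 0 ≤ a) (hd : 0 < d) :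
    (√a / √(2 * d)) ^ 2 * d = a / 2 := by
  rw [div_pow, sq_sqrt ha, sq_sqrt (by positivity)]
  field_simp

lemma div_mem_Icc_zero_one {a b : ℝ} (ha : 0 ≤ a) (hab : a ≤ b) : a / b ∈ Set.Icc 0 1 :=
  ⟨div_nonneg ha (ha.trans hab), div_le_one_of_le₀ hab (ha.trans hab)⟩

lemma sq_sum_mem_Icc_of_sum_sq_eq {ι : Type*} [Fintype ι] {v : ι → ℝ} (hv : ∀ i, 0 ≤ v i)
    (hnorm : ∑ i, v i ^ 2 = Fintype.card ι) :
    (∑ i, v i) ^ 2 ∈ Set.Icc (Fintype.card ι : ℝ) ((Fintype.card ι : ℝ) ^ 2) := by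
  refine ⟨hnorm ▸ sum_sq_le_sq_sum_of_nonneg fun i _ ↦ hv i, ?_⟩
  exact sq_sum_le_card_mul_sum_sq.trans_eq (by rw [card_univ, hnorm, sq])

theorem isoScore_mem_Icc (n : ℕ) (hn : 2 ≤ n) (v : Fin n → ℝ)
    (hv : ∀ i, 0 ≤ v i) (hnorm : ∑ i, (v i) ^ 2 = n) :
    (((n : ℝ) - (Real.sqrt (∑ i, (v i - 1) ^ 2) /
        Real.sqrt (2 * (n - Real.sqrt n))) ^ 2 * ((n : ℝ) - Real.sqrt n)) ^ 2 - n) /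
      ((n : ℝ) * ((n : ℝ) - 1)) ∈ Set.Icc (0 : ℝ) 1 := by
  have hgap : 0 < (n : ℝ) - √n := sub_pos.mpr <| sqrt_lt_self_iff.mpr <| by exact_mod_cast hn
  have hdist : ∑ i, (v i - 1) ^ 2 = 2 * n - 2 * ∑ i, v i := by
    rw [sum_sub_one_sq, hnorm, card_univ, Fintype.card_fin]; ring
  have hiso : (n : ℝ) - (√(∑ i, (v i - 1) ^ 2) / √(2 * (n - √n))) ^ 2 * (n - √n)
      = ∑ i, v i := by
    rw [sq_sqrt_div_sqrt_two_mul_mul (sum_nonneg fun i _ ↦ sq_nonneg _) hgap, hdist]; ring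
  obtain ⟨hlow, hhigh⟩ := sq_sum_mem_Icc_of_sum_sq_eq hv (by simpa using hnorm)
  simp only [Fintype.card_fin] at hlow hhigh
  rw [hiso]
  exact div_mem_Icc_zero_one (by linarith) (by linarith)
end

section
/- With Î_n^{(k)} as above, the IsoScore satisfies the closed formula ι(Î_n^{(k)}) = (k − 1)/(n − 1). -/
open Real Finset

/-!
Writing `a = √(n/k)`, the vector `Î_n^{(k)}` has `k` entries `a` and `n - k` zeros, so
`‖Î - 𝟏‖² = k (a - 1)² + (n - k) = 2 (n - k a) = 2 (n - √(nk))` because `k a² = n`.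
Hence `δ² (n - √n) = n - √(nk)`, the bracket in the IsoScore is `√(nk)`, and
`ι = (nk - n) / (n (n - 1)) = (k - 1) / (n - 1)`.
-/

noncomputable def isotropyDefect {n : ℕ} (v : Fin n → ℝ) : ℝ :=
  √(∑ i, (v i - 1) ^ 2) / √(2 * ((n : ℝ) - √n))

noncomputable def isoScore {n : ℕ} (v : Fin n → ℝ) : ℝ :=
  (((n : ℝ) - isotropyDefect v ^ 2 * ((n : ℝ) - √n)) ^ 2 - n) / ((n : ℝ) * ((n : ℝ) - 1))

noncomputable def isotropicVec (n k : ℕ) (i : Fin n) : ℝ :=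
  if (i : ℕ) < k then √((n : ℝ) / k) else 0

lemma isotropyDefect_sq_mul {n : ℕ} (hn : 1 < n) (v : Fin n → ℝ) :
    isotropyDefect v ^ 2 * ((n : ℝ) - √n) = (∑ i, (v i - 1) ^ 2) / 2 := by
  have hpos : 0 < (n : ℝ) - √n := sub_pos.mpr (sqrt_lt_self_iff.mpr (by exact_mod_cast hn))
  rw [isotropyDefect, div_pow, sq_sqrt (by positivity), sq_sqrt (by positivity)]
  field_simp

lemma isoScore_eq_sum_sq {n : ℕ} (hn : 1 < n) (v : Fin n → ℝ) :
    isoScore v = (((n : ℝ) - (∑ i, (v i - 1) ^ 2) / 2) ^ 2 - n) / ((n : ℝ) * ((n : ℝ) - 1)) := by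
  rw [isoScore, isotropyDefect_sq_mul hn]

lemma sum_sq_ite_lt_sub_one {n k : ℕ} (hkn : k ≤ n) (a : ℝ) :
    ∑ i : Fin n, ((if (i : ℕ) < k then a else 0) - 1) ^ 2 = k * (a - 1) ^ 2 + (n - k) := by
  have hterm (i : Fin n) : ((if (i : ℕ) < k then a else 0) - 1) ^ 2 =
      (if (i : ℕ) < k then (a - 1) ^ 2 - 1 else 0) + 1 := by split_ifs <;> ring
  simp only [hterm, sum_add_distrib, ← sum_filter, sum_const, nsmul_eq_mul, Fin.card_filter_val_lt,
    min_eq_right hkn, card_univ, Fintype.card_fin]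
  ring

lemma mul_sqrt_div_self {x y : ℝ} (hy : 0 < y) : y * √(x / y) = √(x * y) := by
  rw [← sqrt_sq hy.le, ← sqrt_mul (sq_nonneg _), sqrt_sq hy.le]
  congr 1
  field_simp

lemma sum_sq_isotropicVec_sub_one {n k : ℕ} (hk : 0 < k) (hkn : k ≤ n) :
    ∑ i, (isotropicVec n k i - 1) ^ 2 = 2 * ((n : ℝ) - √(n * k)) := by
  have hk' : (0 : ℝ) < k := by exact_mod_cast hk
  have hsq : (k : ℝ) * √((n : ℝ) / k) ^ 2 = n := by
    rw [sq_sqrt (by positivity)]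
    field_simp
  simp only [isotropicVec]
  rw [sum_sq_ite_lt_sub_one hkn, ← mul_sqrt_div_self hk']
  linear_combination hsq

theorem isoScore_isotropicVec {n k : ℕ} (hn : 1 < n) (hk : 0 < k) (hkn : k ≤ n) :
    isoScore (isotropicVec n k) = ((k : ℝ) - 1) / ((n : ℝ) - 1) := by
  have hn' : (1 : ℝ) < n := by exact_mod_cast hn
  rw [isoScore_eq_sum_sq hn, sum_sq_isotropicVec_sub_one hk hkn,
    show (n : ℝ) - 2 * ((n : ℝ) - √(n * k)) / 2 = √(n * k) by ring, sq_sqrt (by positivity)]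
  field_simp [(sub_pos.mpr hn').ne']

theorem isoScore_Ink (n k : ℕ) (hn : 2 ≤ n) (hk1 : 1 ≤ k) (hkn : k ≤ n)
    (v : Fin n → ℝ) (hv : v = fun i : Fin n => if (i : ℕ) < k then Real.sqrt ((n : ℝ) / k) else 0) :
    (((n : ℝ) - (Real.sqrt (∑ i, (v i - 1) ^ 2) /
        Real.sqrt (2 * ((n : ℝ) - Real.sqrt n))) ^ 2 * ((n : ℝ) - Real.sqrt n)) ^ 2 - n) /
      ((n : ℝ) * ((n : ℝ) - 1)) = ((k : ℝ) - 1) / ((n : ℝ) - 1) := by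
  subst hv
  exact isoScore_isotropicVec hn hk1 hkn
end

section
/- Among nonnegative vectors v ∈ ℝⁿ of norm √n whose support is exactly the first k coordinates, the isotropy defect δ(v) = ‖v − 𝟏‖/√(2(n − √n)) is minimized by Î_n^{(k)} (the vector with first k entries √(n/k)); equivalently δ(v) ≥ √(n − √(nk))/√(n − √n). -/
open Real Finset

theorem defect_minimized_by_Ink (n k : ℕ) (hn : 2 ≤ n) (hk1 : 1 ≤ k) (hkn : k ≤ n)
    (v : Fin n → ℝ) (hpos : ∀ i : Fin n, (i : ℕ) < k → 0 < v i)
    (hzero : ∀ i : Fin n, k ≤ (i : ℕ) → v i = 0)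
    (hnorm : ∑ i, (v i) ^ 2 = n) :
    Real.sqrt ((n : ℝ) - Real.sqrt ((n : ℝ) * k)) / Real.sqrt ((n : ℝ) - Real.sqrt n)
      ≤ Real.sqrt (∑ i, (v i - 1) ^ 2) / Real.sqrt (2 * ((n : ℝ) - Real.sqrt n)) := by
  set S : ℝ := ∑ i, v i with hS
  set g : Fin n → ℝ := fun i => if (i : ℕ) < k then 1 else 0 with hg
  have hSnn : 0 ≤ S := Finset.sum_nonneg fun i _ => by
    by_cases h : (i : ℕ) < k
    · exact (hpos i h).le
    · rw [hzero i (le_of_not_gt h)]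
  have hgsum : ∑ i, (g i) ^ 2 = (k : ℝ) := by
    have h1 : ∑ i, (g i) ^ 2 = ∑ i ∈ Finset.range n, (if i < k then (1:ℝ) else 0) := by
      rw [← Fin.sum_univ_eq_sum_range (fun i => if i < k then (1:ℝ) else 0) n]
      refine Finset.sum_congr rfl fun i _ => ?_
      by_cases h : (i : ℕ) < k <;> simp [hg, h]
    have h2 : Finset.filter (fun i => i < k) (Finset.range n) = Finset.range k := by
      ext x; simp; omega
    rw [h1, ← Finset.sum_filter, h2]
    simp
  have hSg : S = ∑ i, v i * g i := by
    refine Finset.sum_congr rfl fun i _ => ?_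
    by_cases h : (i : ℕ) < k
    · simp [hg, h]
    · simp [hg, h, hzero i (le_of_not_gt h)]
  have hcauchy : S ^ 2 ≤ (n : ℝ) * k := by
    rw [hSg]
    calc (∑ i, v i * g i) ^ 2 ≤ (∑ i, (v i) ^ 2) * (∑ i, (g i) ^ 2) :=
          Finset.sum_mul_sq_le_sq_mul_sq Finset.univ v g
      _ = (n : ℝ) * k := by rw [hnorm, hgsum]
  have hSle : S ≤ Real.sqrt ((n : ℝ) * k) := by
    have := Real.sqrt_le_sqrt hcauchy
    rwa [Real.sqrt_sq hSnn] at this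
  have hsum : ∑ i, (v i - 1) ^ 2 = 2 * (n : ℝ) - 2 * S := by
    have hexp : ∀ i : Fin n, (v i - 1) ^ 2 = (v i) ^ 2 - 2 * v i + 1 := fun i => by ring
    rw [Finset.sum_congr rfl fun i _ => hexp i, Finset.sum_add_distrib,
      Finset.sum_sub_distrib, ← Finset.mul_sum, hnorm]
    simp [Finset.card_univ]
    ring
  have hnk_le : Real.sqrt ((n : ℝ) * k) ≤ (n : ℝ) := by
    have : ((n : ℝ) * k) ≤ (n : ℝ) ^ 2 := by
      have : (k : ℝ) ≤ (n : ℝ) := by exact_mod_cast hkn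
      nlinarith [show (0:ℝ) ≤ (n:ℝ) by positivity]
    calc Real.sqrt ((n:ℝ) * k) ≤ Real.sqrt ((n:ℝ)^2) := Real.sqrt_le_sqrt this
      _ = (n : ℝ) := Real.sqrt_sq (by positivity)
  have hA : (0 : ℝ) ≤ (n : ℝ) - Real.sqrt ((n : ℝ) * k) := by linarith
  have hB : (0 : ℝ) < (n : ℝ) - Real.sqrt n := by
    have h1 : (2 : ℝ) ≤ (n : ℝ) := by exact_mod_cast hn
    nlinarith [Real.sq_sqrt (by positivity : (0:ℝ) ≤ (n:ℝ)), Real.sqrt_nonneg (n : ℝ)]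
  have hX : 2 * ((n : ℝ) - Real.sqrt ((n : ℝ) * k)) ≤ ∑ i, (v i - 1) ^ 2 := by
    rw [hsum]; linarith
  have key : Real.sqrt (2 * ((n : ℝ) - Real.sqrt ((n : ℝ) * k)))
      ≤ Real.sqrt (∑ i, (v i - 1) ^ 2) := Real.sqrt_le_sqrt hX
  have h2B : (0 : ℝ) < Real.sqrt (2 * ((n : ℝ) - Real.sqrt n)) :=
    Real.sqrt_pos.mpr (by linarith)
  calc Real.sqrt ((n : ℝ) - Real.sqrt ((n : ℝ) * k)) / Real.sqrt ((n : ℝ) - Real.sqrt n)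
      = Real.sqrt (2 * ((n : ℝ) - Real.sqrt ((n : ℝ) * k)))
          / Real.sqrt (2 * ((n : ℝ) - Real.sqrt n)) := by
        rw [Real.sqrt_mul (by norm_num) ((n : ℝ) - Real.sqrt ((n : ℝ) * k)),
          Real.sqrt_mul (by norm_num) ((n : ℝ) - Real.sqrt n),
          mul_div_mul_left _ _ (by positivity : Real.sqrt 2 ≠ 0)]
    _ ≤ Real.sqrt (∑ i, (v i - 1) ^ 2) / Real.sqrt (2 * ((n : ℝ) - Real.sqrt n)) :=
        by gcongr
end

section
/- Among nonnegative vectors v ∈ ℝⁿ of norm √n supported on exactly the first k coordinates, the IsoScore ι(v) is maximized by Î_n^{(k)}, so ι(v) ≤ (k − 1)/(n − 1). -/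
open Real Finset

theorem isoScore_maximized_by_Ink (n k : ℕ) (hn : 2 ≤ n) (hk1 : 1 ≤ k) (hkn : k ≤ n)
    (v : Fin n → ℝ) (hpos : ∀ i : Fin n, (i : ℕ) < k → 0 < v i)
    (hzero : ∀ i : Fin n, k ≤ (i : ℕ) → v i = 0)
    (hnorm : ∑ i, (v i) ^ 2 = n) :
    (((n : ℝ) - (Real.sqrt (∑ i, (v i - 1) ^ 2) /
        Real.sqrt (2 * ((n : ℝ) - Real.sqrt n))) ^ 2 * ((n : ℝ) - Real.sqrt n)) ^ 2 - n) /
      ((n : ℝ) * ((n : ℝ) - 1)) ≤ ((k : ℝ) - 1) / ((n : ℝ) - 1) := by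
  have hn2 : (2:ℝ) ≤ n := by exact_mod_cast hn
  set S := ∑ i, v i with hS
  have hsn : Real.sqrt n < n := by rw [Real.sqrt_lt' (by positivity)]; nlinarith
  have hsn0 : (0:ℝ) ≤ Real.sqrt n := Real.sqrt_nonneg _
  -- sum of (v i - 1)^2
  have hA : ∑ i, (v i - 1)^2 = 2*n - 2*S := by
    have h1 : ∀ i ∈ Finset.univ, (v i - 1)^2 = v i^2 - 2 * v i + 1 := fun i _ => by ring
    rw [Finset.sum_congr rfl h1, Finset.sum_add_distrib, Finset.sum_sub_distrib, hnorm,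
      ← Finset.mul_sum, Finset.sum_const, Finset.card_univ, Fintype.card_fin]
    ring
  have hA0 : (0:ℝ) ≤ ∑ i, (v i - 1)^2 := Finset.sum_nonneg fun i _ => sq_nonneg _
  have hB0 : (0:ℝ) < 2 * ((n:ℝ) - Real.sqrt n) := by linarith
  have hsq : (Real.sqrt (∑ i, (v i - 1) ^ 2) / Real.sqrt (2 * ((n : ℝ) - Real.sqrt n))) ^ 2
      = (2*n - 2*S) / (2 * ((n:ℝ) - Real.sqrt n)) := by
    rw [div_pow, Real.sq_sqrt hA0, Real.sq_sqrt hB0.le, hA]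
  rw [hsq]
  have hne : (n:ℝ) - Real.sqrt n ≠ 0 := by linarith
  have key : ((n:ℝ) - (2*n - 2*S) / (2 * ((n:ℝ) - Real.sqrt n)) * ((n:ℝ) - Real.sqrt n)) = S := by
    field_simp
    ring
  rw [key]
  -- Cauchy-Schwarz
  set s := Finset.univ.filter (fun i : Fin n => (i:ℕ) < k) with hs
  have hcard : s.card = k := by
    rw [hs, ← Fintype.card_subtype, Fintype.card_eq_nat_card,
      Nat.card_eq_of_bijective (fun x : {i : Fin n // (i:ℕ) < k} => (⟨x.1, x.2⟩ : Fin k))]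
    · simp
    constructor
    · rintro ⟨⟨a,ha⟩,ha2⟩ ⟨⟨b,hb⟩,hb2⟩ h
      simpa using h
    · rintro ⟨a, ha⟩
      exact ⟨⟨⟨a, lt_of_lt_of_le ha hkn⟩, ha⟩, rfl⟩
  have hSsum : S = ∑ i ∈ s, v i := by
    rw [hS, ← Finset.sum_filter_add_sum_filter_not Finset.univ (fun i : Fin n => (i:ℕ) < k)]
    rw [← hs]
    have : ∑ i ∈ Finset.univ.filter (fun i : Fin n => ¬(i:ℕ) < k), v i = 0 :=
      Finset.sum_eq_zero fun i hi => hzero i (le_of_not_gt (Finset.mem_filter.mp hi).2)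
    rw [this, add_zero]
  have hnsum : ∑ i ∈ s, (v i)^2 = n := by
    rw [← hnorm, ← Finset.sum_filter_add_sum_filter_not Finset.univ (fun i : Fin n => (i:ℕ) < k), ← hs]
    have : ∑ i ∈ Finset.univ.filter (fun i : Fin n => ¬(i:ℕ) < k), (v i)^2 = 0 :=
      Finset.sum_eq_zero fun i hi => by
        rw [hzero i (le_of_not_gt (Finset.mem_filter.mp hi).2)]; ring
    rw [this, add_zero]
  have hCS : S^2 ≤ k * n := by
    have := Finset.sum_mul_sq_le_sq_mul_sq s (fun _ => (1:ℝ)) v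
    simp only [one_mul, one_pow, Finset.sum_const, nsmul_eq_mul, mul_one] at this
    rw [hnsum, hcard] at this
    rw [hSsum]
    exact this
  have hk1' : (1:ℝ) ≤ k := by exact_mod_cast hk1
  rw [div_le_div_iff₀ (by nlinarith) (by linarith)]
  nlinarith
end

section
/- The IsoScore ι, as a function of the isotropy defect d ∈ [0,1] via ι(d) = ((n − d²(n − √n))² − n)/(n(n−1)), is strictly monotonically decreasing in d for n ≥ 2. -/
open Real

theorem isoScore_strictAntiOn_defect (n : ℕ) (hn : 2 ≤ n) :
    StrictAntiOn
      (fun d : ℝ => (((n : ℝ) - d ^ 2 * ((n : ℝ) - Real.sqrt n)) ^ 2 - n) /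
        ((n : ℝ) * ((n : ℝ) - 1)))
      (Set.Icc 0 1) := by
  have hn2 : (2 : ℝ) ≤ (n : ℝ) := by exact_mod_cast hn
  have hn1 : (1 : ℝ) < (n : ℝ) := by linarith
  have hs : Real.sqrt n < (n : ℝ) := (Real.sqrt_lt' (by linarith)).mpr (by nlinarith)
  have hs0 : (0 : ℝ) ≤ Real.sqrt n := Real.sqrt_nonneg _
  have ha : (0 : ℝ) < (n : ℝ) - Real.sqrt n := by linarith
  have hden : (0 : ℝ) < (n : ℝ) * ((n : ℝ) - 1) := by nlinarith
  intro x hx y hy hxy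
  simp only [Set.mem_Icc] at hx hy
  apply div_lt_div_of_pos_right ?_ hden
  have hx2y2 : x ^ 2 < y ^ 2 := by nlinarith [hx.1, hy.2]
  have hy21 : y ^ 2 ≤ 1 := by nlinarith [hy.2, hy.1]
  have hpos : (0 : ℝ) ≤ (n : ℝ) - y ^ 2 * ((n : ℝ) - Real.sqrt n) := by nlinarith
  have hlt : (n : ℝ) - y ^ 2 * ((n : ℝ) - Real.sqrt n) <
      (n : ℝ) - x ^ 2 * ((n : ℝ) - Real.sqrt n) := by nlinarith
  nlinarith [sq_nonneg ((n : ℝ) - y ^ 2 * ((n : ℝ) - Real.sqrt n))]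
end
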